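/- On the unit sphere S^{d−1} = {x ∈ ℝ^d : ‖x‖ = 1}, the geodesic distance ψ(x,y) = arccos(⟨x,y⟩) is a negative definite kernel on the whole sphere; consequently, for every t > 0, the kernel k(x,y) = exp(−arccos(⟨x,y⟩)/t) is positive definite on S^{d−1}. -/

import Mathlib

open scoped RealInnerProductSpace

/-- A symmetric function `k : X × X → ℝ` is a positive definite kernel on `X` if
`∑ᵢⱼ cᵢ cⱼ k(xᵢ,xⱼ) ≥ 0` for all finite families of points and real coefficients. -/
def IsPosDefKernel {X : Type*} (k : X → X → ℝ) : Prop :=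
  (∀ x y, k x y = k y x) ∧
  ∀ (n : ℕ) (x : Fin n → X) (c : Fin n → ℝ),
    0 ≤ ∑ i, ∑ j, c i * c j * k (x i) (x j)
/-- A symmetric function `ψ : X × X → ℝ` is a negative definite kernel on `X` if
`∑ᵢⱼ cᵢ cⱼ ψ(xᵢ,xⱼ) ≤ 0` for all finite families of points and real coefficients
summing to zero. -/
def IsNegDefKernel {X : Type*} (ψ : X → X → ℝ) : Prop :=
  (∀ x y, ψ x y = ψ y x) ∧
  ∀ (n : ℕ) (x : Fin n → X) (c : Fin n → ℝ), (∑ i, c i) = 0 →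
    ∑ i, ∑ j, c i * c j * ψ (x i) (x j) ≤ 0

/-!
Since `arccos = π / 2 - arcsin` and `∑ cᵢ = 0` kills constant kernels, negative definiteness of
`arccos ⟪x, y⟫` is positive definiteness of `arcsin ⟪x, y⟫`. The Gram kernel `⟪x, y⟫` is positive
definite, hence so are its pointwise powers (Schur product theorem) and every convergent series of
them with nonnegative coefficients. Both `arcsin` (whose Taylor coefficients come from
`(1 - u) ^ (-1/2)`) and `exp` are such series. Finally
`exp (-arccos s / t) = exp (-π / (2 t)) * exp (arcsin s / t)`.
-/

open Filter Topology Matrix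

lemma Finset.sum_sum_mul_mul_const {ι R : Type*} [CommSemiring R] (s : Finset ι) (c : ι → R)
    (a : R) : ∑ i ∈ s, ∑ j ∈ s, c i * c j * a = a * (∑ i ∈ s, c i) ^ 2 := by
  rw [sq, Finset.sum_mul_sum, Finset.mul_sum]
  simp only [Finset.mul_sum]
  exact Finset.sum_congr rfl fun i _ => Finset.sum_congr rfl fun j _ => by ring

lemma Matrix.dotProduct_of_mulVec {ι R : Type*} [Fintype ι] [CommSemiring R] (A : ι → ι → R)
    (c : ι → R) : c ⬝ᵥ (of A *ᵥ c) = ∑ i, ∑ j, c i * c j * A i j := by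
  simp only [dotProduct, mulVec, of_apply, Finset.mul_sum]
  exact Finset.sum_congr rfl fun i _ => Finset.sum_congr rfl fun j _ => by ring

lemma Ring.multichoose_pos {R : Type*} [Field R] [LinearOrder R] [IsStrictOrderedRing R]
    {r : R} (hr : 0 < r) (n : ℕ) : 0 < Ring.multichoose r n := by
  have h := Ring.factorial_nsmul_multichoose_eq_ascPochhammer r n
  rw [Polynomial.ascPochhammer_smeval_eq_eval, nsmul_eq_mul] at h
  exact pos_of_mul_pos_right (h ▸ ascPochhammer_pos n r hr) (by positivity)

namespace Real

lemma hasSum_multichoose_half_mul_pow {u : ℝ} (hu : |u| < 1) :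
    HasSum (fun n => Ring.multichoose (1 / 2 : ℝ) n * u ^ n) (1 / √(1 - u)) := by
  have hmem : u ∈ Metric.eball (0 : ℝ) 1 := by
    rw [Metric.mem_eball, edist_zero_right, enorm_eq_nnnorm]
    exact_mod_cast (by simpa using hu : ‖u‖ < 1)
  simpa [FormalMultilinearSeries.ofScalars_apply_eq, Ring.multichoose_eq, sqrt_eq_rpow, mul_comm]
    using (one_div_one_sub_rpow_hasFPowerSeriesOnBall_zero (1 / 2)).hasSum hmem

lemma summable_multichoose_half_div_mul_pow {y : ℝ} (hy : |y| < 1) :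
    Summable fun n => Ring.multichoose (1 / 2 : ℝ) n / (2 * n + 1) * y ^ (2 * n + 1) := by
  refine .of_norm_bounded (hasSum_multichoose_half_mul_pow
    (by rwa [abs_sq, sq_lt_one_iff_abs_lt_one])).summable fun n => ?_
  have ha := (Ring.multichoose_pos (one_half_pos : (0 : ℝ) < 1 / 2) n).le
  have hdiv : Ring.multichoose (1 / 2 : ℝ) n / (2 * n + 1) ≤ Ring.multichoose (1 / 2 : ℝ) n :=
    div_le_self ha (by linarith [n.cast_nonneg (α := ℝ)])
  rw [norm_mul, norm_of_nonneg (by positivity), norm_pow, norm_eq_abs, pow_succ, pow_mul, sq_abs]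
  calc _ ≤ Ring.multichoose (1 / 2 : ℝ) n * ((y ^ 2) ^ n * 1) := by gcongr
    _ = _ := by ring

/-- Differentiate termwise on a ball `|z| < R` with `|y| < R < 1`, where the derivative series is
dominated by its value at `R`. -/
lemma hasDerivAt_tsum_multichoose_half_div_mul_pow {y : ℝ} (hy : |y| < 1) :
    HasDerivAt (fun z => ∑' n, Ring.multichoose (1 / 2 : ℝ) n / (2 * n + 1) * z ^ (2 * n + 1))
      (1 / √(1 - y ^ 2)) y := by
  set a : ℕ → ℝ := fun n => Ring.multichoose (1 / 2 : ℝ) n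
  obtain ⟨R, hyR, hR1⟩ := exists_between hy
  have hR0 : 0 < R := (abs_nonneg y).trans_lt hyR
  have hg : ∀ n z, z ∈ Metric.ball (0 : ℝ) R →
      HasDerivAt (fun w => a n / (2 * n + 1) * w ^ (2 * n + 1)) (a n * z ^ (2 * n)) z := by
    intro n z _
    refine ((hasDerivAt_pow (2 * n + 1) z).const_mul (a n / (2 * n + 1))).congr_deriv ?_
    rw [Nat.add_sub_cancel]
    push_cast
    field_simp
  have hg' : ∀ n z, z ∈ Metric.ball (0 : ℝ) R → ‖a n * z ^ (2 * n)‖ ≤ a n * (R ^ 2) ^ n := by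
    intro n z hz
    have ha := (Ring.multichoose_pos (one_half_pos : (0 : ℝ) < 1 / 2) n).le
    rw [norm_mul, norm_of_nonneg ha, norm_pow, ← pow_mul]
    gcongr
    exact (by simpa using hz : |z| < R).le
  have hu : Summable fun n => a n * (R ^ 2) ^ n :=
    (hasSum_multichoose_half_mul_pow
      (by rwa [abs_sq, sq_lt_one_iff_abs_lt_one, abs_of_pos hR0])).summable
  refine (hasDerivAt_tsum_of_isPreconnected hu Metric.isOpen_ball
    (convex_ball _ _).isPreconnected hg hg' (Metric.mem_ball_self hR0) (by simp)
    (by simpa using hyR)).congr_deriv ?_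
  simp_rw [pow_mul]
  exact (hasSum_multichoose_half_mul_pow (by rwa [abs_sq, sq_lt_one_iff_abs_lt_one])).tsum_eq

theorem hasSum_arcsin {y : ℝ} (hy : |y| < 1) :
    HasSum (fun n => Ring.multichoose (1 / 2 : ℝ) n / (2 * n + 1) * y ^ (2 * n + 1))
      (arcsin y) := by
  have hball : ∀ {z : ℝ}, z ∈ Metric.ball (0 : ℝ) 1 → |z| < 1 := fun hz => by simpa using hz
  have harcsin : ∀ z ∈ Metric.ball (0 : ℝ) 1, HasDerivAt arcsin (1 / √(1 - z ^ 2)) z := by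
    intro z hz
    obtain ⟨hz₁, hz₂⟩ := abs_lt.mp (hball hz)
    exact hasDerivAt_arcsin hz₁.ne' hz₂.ne
  have hseries := fun z (hz : z ∈ Metric.ball (0 : ℝ) 1) =>
    hasDerivAt_tsum_multichoose_half_div_mul_pow (hball hz)
  have heq := Metric.isOpen_ball.eqOn_of_deriv_eq (convex_ball _ _).isPreconnected
    (fun z hz => (harcsin z hz).differentiableAt.differentiableWithinAt)
    (fun z hz => (hseries z hz).differentiableAt.differentiableWithinAt)
    (fun z hz => (harcsin z hz).deriv.trans (hseries z hz).deriv.symm)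
    (Metric.mem_ball_self one_pos) (by simp)
  rw [heq (by simpa using hy)]
  exact (summable_multichoose_half_div_mul_pow hy).hasSum

end Real

lemma isPosDefKernel_inner {E : Type*} [NormedAddCommGroup E] [InnerProductSpace ℝ E] :
    IsPosDefKernel fun x y : E => ⟪x, y⟫ := by
  refine ⟨fun x y => real_inner_comm y x, fun n x c => ?_⟩
  have hgram : ∑ i, ∑ j, c i * c j * ⟪x i, x j⟫ = ⟪∑ i, c i • x i, ∑ j, c j • x j⟫ := by
    simp only [sum_inner, inner_sum, real_inner_smul_left, real_inner_smul_right]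
    exact Finset.sum_congr rfl fun i _ => Finset.sum_congr rfl fun j _ => by
      rw [real_inner_comm]; ring
  rw [hgram]
  exact real_inner_self_nonneg

namespace IsPosDefKernel

variable {X : Type*} {k l : X → X → ℝ}

lemma posSemidef (hk : IsPosDefKernel k) {n : ℕ} (x : Fin n → X) :
    (of fun i j => k (x i) (x j)).PosSemidef := by
  refine .of_dotProduct_mulVec_nonneg (IsHermitian.ext fun i j => hk.1 _ _) fun c => ?_
  rw [star_trivial, dotProduct_of_mulVec]
  exact hk.2 n x c

lemma comp {Y : Type*} (hk : IsPosDefKernel k) (f : Y → X) :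
    IsPosDefKernel fun x y => k (f x) (f y) :=
  ⟨fun _ _ => hk.1 _ _, fun n x c => hk.2 n (f ∘ x) c⟩

lemma const {a : ℝ} (ha : 0 ≤ a) : IsPosDefKernel fun _ _ : X => a := by
  refine ⟨fun _ _ => rfl, fun n x c => ?_⟩
  rw [Finset.sum_sum_mul_mul_const]
  positivity

lemma const_mul (hk : IsPosDefKernel k) {a : ℝ} (ha : 0 ≤ a) :
    IsPosDefKernel fun x y => a * k x y := by
  refine ⟨fun x y => congrArg (a * ·) (hk.1 x y), fun n x c => ?_⟩
  have hfactor : ∑ i, ∑ j, c i * c j * (a * k (x i) (x j))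
      = a * ∑ i, ∑ j, c i * c j * k (x i) (x j) := by
    simp only [Finset.mul_sum]
    exact Finset.sum_congr rfl fun i _ => Finset.sum_congr rfl fun j _ => by ring
  rw [hfactor]
  exact mul_nonneg ha (hk.2 n x c)

lemma sum {ι : Type*} (s : Finset ι) {K : ι → X → X → ℝ}
    (hK : ∀ m ∈ s, IsPosDefKernel (K m)) : IsPosDefKernel fun x y => ∑ m ∈ s, K m x y := by
  refine ⟨fun x y => Finset.sum_congr rfl fun m hm => (hK m hm).1 x y, fun n x c => ?_⟩
  have hswap : ∑ i, ∑ j, c i * c j * ∑ m ∈ s, K m (x i) (x j)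
      = ∑ m ∈ s, ∑ i, ∑ j, c i * c j * K m (x i) (x j) := by
    simp only [Finset.mul_sum]
    exact (Finset.sum_congr rfl fun i _ => Finset.sum_comm).trans Finset.sum_comm
  rw [hswap]
  exact Finset.sum_nonneg fun m hm => (hK m hm).2 n x c

lemma mul (hk : IsPosDefKernel k) (hl : IsPosDefKernel l) :
    IsPosDefKernel fun x y => k x y * l x y := by
  refine ⟨fun x y => congrArg₂ (· * ·) (hk.1 x y) (hl.1 x y), fun n x c => ?_⟩
  have hschur : 0 ≤ c ⬝ᵥ (of (fun i j => k (x i) (x j) * l (x i) (x j)) *ᵥ c) :=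
    ((hk.posSemidef x).hadamard (hl.posSemidef x)).dotProduct_mulVec_nonneg c
  rwa [dotProduct_of_mulVec] at hschur

lemma pow (hk : IsPosDefKernel k) (m : ℕ) : IsPosDefKernel fun x y => k x y ^ m := by
  induction m with
  | zero => simpa using const (X := X) zero_le_one
  | succ m ih => simpa only [pow_succ] using ih.mul hk

lemma of_tendsto {ι : Type*} {L : Filter ι} [L.NeBot] {K : ι → X → X → ℝ}
    (hK : ∀ᶠ i in L, IsPosDefKernel (K i))
    (hlim : ∀ x y, Tendsto (fun i => K i x y) L (𝓝 (k x y))) : IsPosDefKernel k := by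
  refine ⟨fun x y => tendsto_nhds_unique (hlim x y) ?_, fun n x c => ?_⟩
  · exact (hlim y x).congr' (hK.mono fun i hi => hi.1 y x)
  · refine ge_of_tendsto ?_ (hK.mono fun i hi => hi.2 n x c)
    exact tendsto_finsetSum _ fun i _ => tendsto_finsetSum _ fun j _ => (hlim _ _).const_mul _

lemma of_hasSum {ι : Type*} {K : ι → X → X → ℝ} (hK : ∀ i, IsPosDefKernel (K i))
    (hsum : ∀ x y, HasSum (fun i => K i x y) (k x y)) : IsPosDefKernel k :=
  of_tendsto (Eventually.of_forall fun s => sum s fun i _ => hK i) hsum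

lemma of_hasSum_pow (hk : IsPosDefKernel k) {a : ℕ → ℝ} (ha : ∀ m, 0 ≤ a m) (e : ℕ → ℕ)
    (hsum : ∀ x y, HasSum (fun m => a m * k x y ^ e m) (l x y)) : IsPosDefKernel l :=
  of_hasSum (fun m => (hk.pow (e m)).const_mul (ha m)) hsum

lemma exp (hk : IsPosDefKernel k) : IsPosDefKernel fun x y => Real.exp (k x y) :=
  hk.of_hasSum_pow (a := fun m => (m.factorial : ℝ)⁻¹) (fun m => by positivity) id fun x y => by
    simpa [Real.exp_eq_exp_ℝ] using NormedSpace.exp_series_hasSum_exp' (𝕂 := ℝ) (k x y)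

/-- The arcsin series need not converge where `|k x y| = 1`, so apply it to `r * k` and let
`r → 1⁻`. -/
lemma arcsin (hk : IsPosDefKernel k) (hk1 : ∀ x y, |k x y| ≤ 1) :
    IsPosDefKernel fun x y => Real.arcsin (k x y) := by
  have hscaled : ∀ r ∈ Set.Ioo (0 : ℝ) 1,
      IsPosDefKernel fun x y => Real.arcsin (r * k x y) := by
    rintro r ⟨hr0, hr1⟩
    refine (hk.const_mul hr0.le).of_hasSum_pow
      (fun n => div_nonneg (Ring.multichoose_pos one_half_pos n).le (by positivity))
      (fun n => 2 * n + 1) fun x y => Real.hasSum_arcsin ?_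
    rw [abs_mul, abs_of_pos hr0]
    nlinarith [hk1 x y, abs_nonneg (k x y)]
  refine of_tendsto (eventually_of_mem (Ioo_mem_nhdsLT zero_lt_one) hscaled) fun x y => ?_
  have hcont : Tendsto (fun r => Real.arcsin (r * k x y)) (𝓝 1) (𝓝 (Real.arcsin (1 * k x y))) :=
    (Real.continuous_arcsin.comp (continuous_id.mul continuous_const)).tendsto 1
  simpa using hcont.mono_left nhdsWithin_le_nhds

lemma isNegDefKernel_const_sub (hk : IsPosDefKernel k) (a : ℝ) :
    IsNegDefKernel fun x y => a - k x y := by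
  refine ⟨fun x y => congrArg (a - ·) (hk.1 x y), fun n x c hc => ?_⟩
  have hsplit : ∑ i, ∑ j, c i * c j * (a - k (x i) (x j))
      = a * (∑ i, c i) ^ 2 - ∑ i, ∑ j, c i * c j * k (x i) (x j) := by
    simp only [mul_sub, Finset.sum_sub_distrib, Finset.sum_sum_mul_mul_const]
  rw [hsplit, hc]
  linarith [hk.2 n x c]

end IsPosDefKernel

theorem arccos_negdef_on_sphere_and_exp_posdef (d : ℕ) :
    IsNegDefKernel (fun x y : Metric.sphere (0 : EuclideanSpace ℝ (Fin d)) 1 =>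
      Real.arccos ⟪(x : EuclideanSpace ℝ (Fin d)), (y : EuclideanSpace ℝ (Fin d))⟫) ∧
    ∀ t : ℝ, 0 < t →
      IsPosDefKernel (fun x y : Metric.sphere (0 : EuclideanSpace ℝ (Fin d)) 1 =>
        Real.exp (-Real.arccos ⟪(x : EuclideanSpace ℝ (Fin d)), (y : EuclideanSpace ℝ (Fin d))⟫ / t)) := by
  have hgram : IsPosDefKernel fun x y : Metric.sphere (0 : EuclideanSpace ℝ (Fin d)) 1 =>
      ⟪(x : EuclideanSpace ℝ (Fin d)), (y : EuclideanSpace ℝ (Fin d))⟫ :=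
    isPosDefKernel_inner.comp Subtype.val
  have hbound : ∀ x y : Metric.sphere (0 : EuclideanSpace ℝ (Fin d)) 1,
      |⟪(x : EuclideanSpace ℝ (Fin d)), (y : EuclideanSpace ℝ (Fin d))⟫| ≤ 1 := fun x y =>
    (abs_real_inner_le_norm _ _).trans (by simp)
  have harcsin := hgram.arcsin hbound
  refine ⟨?_, fun t ht => ?_⟩
  · simpa only [Real.arccos_eq_pi_div_two_sub_arcsin] using
      harcsin.isNegDefKernel_const_sub (Real.pi / 2)
  · convert ((harcsin.const_mul (inv_nonneg.2 ht.le)).exp.const_mul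
      (Real.exp_pos (-(Real.pi / 2) / t)).le) using 1
    funext x y
    rw [Real.arccos_eq_pi_div_two_sub_arcsin, ← Real.exp_add]
    ring_nf
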